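/- If α > 0 satisfies α² ≤ (1−σ²)⁴/(17920·Q²·L²), then det(I₃ − G_α) ≥ μα(1−σ²)²/32, where I₃ is the 3×3 identity matrix. -/

import Mathlib

/-- The matrix `G_α` governing the inner-loop dynamics of GT-SVRG. -/
noncomputable def Gmat (L μ σ α : ℝ) : Matrix (Fin 3) (Fin 3) ℝ :=
  !![(1 + σ ^ 2) / 2, 0, 2 * α ^ 2 / (1 - σ ^ 2);
     2 * L ^ 2 * α / μ, 1 - μ * α / 2, 0;
     100 * L ^ 2 / (1 - σ ^ 2), 70 * L ^ 2 / (1 - σ ^ 2),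
       (1 + σ ^ 2) / 2 + 40 * L ^ 2 * α ^ 2 / (1 - σ ^ 2)]

/-!
Write `t = 1 - σ²`. Clearing the denominators `μ` and `t` of `G_α`, the determinant
satisfies `μ t² · det(I - G_α) = μ²α t⁴/8 - α³(10μ²L²t² + 280L⁴ + 100μ²L²)`.
Since `μ ≤ L` and `t ≤ 1`, the cubic correction is at most `390 L⁴ α³`, and the step-size
condition `17920 L⁴ α² ≤ μ² t⁴` makes this smaller than `3μ²α t⁴/32`.
-/

theorem det_one_sub_Gmat_mul (L μ σ α : ℝ) (hμ : μ ≠ 0) (hσ : 1 - σ ^ 2 ≠ 0) :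
    (1 - Gmat L μ σ α).det * (μ * (1 - σ ^ 2) ^ 2) =
      μ ^ 2 * α * (1 - σ ^ 2) ^ 4 / 8 - 10 * μ ^ 2 * L ^ 2 * α ^ 3 * (1 - σ ^ 2) ^ 2
        - 280 * L ^ 4 * α ^ 3 - 100 * μ ^ 2 * L ^ 2 * α ^ 3 := by
  rw [Matrix.one_fin_three, Gmat, Matrix.det_fin_three]
  simp only [Matrix.sub_apply, Matrix.of_apply, Matrix.cons_val', Matrix.cons_val_zero,
    Matrix.cons_val_fin_one, Matrix.cons_val_one, Matrix.cons_val, sub_sub_cancel, sub_self]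
  field_simp
  ring

theorem mul_sq_le_mul_pow_four_of_sq_le_div {L μ t α : ℝ} (hμ : μ ≠ 0) (hL : L ≠ 0)
    (hα : α ^ 2 ≤ t ^ 4 / (17920 * (L / μ) ^ 2 * L ^ 2)) :
    17920 * L ^ 4 * α ^ 2 ≤ μ ^ 2 * t ^ 4 := by
  rw [le_div_iff₀ (by positivity)] at hα
  calc 17920 * L ^ 4 * α ^ 2 = α ^ 2 * (17920 * (L / μ) ^ 2 * L ^ 2) * μ ^ 2 := by
        field_simp
    _ ≤ t ^ 4 * μ ^ 2 := by gcongr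
    _ = μ ^ 2 * t ^ 4 := mul_comm _ _

theorem cubic_correction_le {L μ t α : ℝ} (hμ : 0 ≤ μ) (hμL : μ ≤ L) (ht : 0 ≤ t)
    (ht1 : t ≤ 1) (hα : 0 ≤ α) (hstep : 17920 * L ^ 4 * α ^ 2 ≤ μ ^ 2 * t ^ 4) :
    10 * μ ^ 2 * L ^ 2 * α ^ 3 * t ^ 2 + 280 * L ^ 4 * α ^ 3 + 100 * μ ^ 2 * L ^ 2 * α ^ 3 ≤
      3 / 32 * (μ ^ 2 * α * t ^ 4) := by
  have hμL2 : μ ^ 2 ≤ L ^ 2 := pow_le_pow_left₀ hμ hμL 2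
  have hμt : μ ^ 2 * t ^ 2 ≤ L ^ 2 :=
    le_trans (mul_le_of_le_one_right (sq_nonneg μ) (pow_le_one₀ ht ht1)) hμL2
  have hcorr : 10 * μ ^ 2 * L ^ 2 * α ^ 3 * t ^ 2 + 280 * L ^ 4 * α ^ 3
      + 100 * μ ^ 2 * L ^ 2 * α ^ 3 ≤ 390 * L ^ 4 * α ^ 3 := by
    have hα3 : 0 ≤ α ^ 3 := pow_nonneg hα 3
    linarith [mul_le_mul_of_nonneg_left hμt (mul_nonneg (sq_nonneg L) hα3),
      mul_le_mul_of_nonneg_left hμL2 (mul_nonneg (sq_nonneg L) hα3)]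
  have hlead : 0 ≤ μ ^ 2 * α * t ^ 4 := by positivity
  linarith [mul_le_mul_of_nonneg_right hstep hα]

/-- If `α² ≤ (1−σ²)⁴/(17920·Q²·L²)` with `Q = L/μ`, then
`det(I − G_α) ≥ μα(1−σ²)²/32`. -/
theorem det_one_sub_Gmat_lower_bound (L μ σ α : ℝ)
    (hμ : 0 < μ) (hμL : μ ≤ L) (hσ0 : 0 < σ) (hσ1 : σ < 1)
    (hα0 : 0 < α)
    (hα : α ^ 2 ≤ (1 - σ ^ 2) ^ 4 / (17920 * (L / μ) ^ 2 * L ^ 2)) :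
    μ * α * (1 - σ ^ 2) ^ 2 / 32 ≤ (1 - Gmat L μ σ α).det := by
  have ht : 0 < 1 - σ ^ 2 := sub_pos.mpr (pow_lt_one₀ hσ0.le hσ1 two_ne_zero)
  have ht1 : 1 - σ ^ 2 ≤ 1 := sub_le_self _ (sq_nonneg σ)
  have hscale : 0 < μ * (1 - σ ^ 2) ^ 2 := by positivity
  have hstep := mul_sq_le_mul_pow_four_of_sq_le_div hμ.ne' (hμ.trans_le hμL).ne' hα
  rw [← mul_le_mul_iff_of_pos_right hscale, det_one_sub_Gmat_mul L μ σ α hμ.ne' ht.ne']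
  calc μ * α * (1 - σ ^ 2) ^ 2 / 32 * (μ * (1 - σ ^ 2) ^ 2)
      = μ ^ 2 * α * (1 - σ ^ 2) ^ 4 / 32 := by ring
    _ ≤ _ := by linarith [cubic_correction_le hμ.le hμL ht.le ht1 hα0.le hstep]
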